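/- arXiv:2202.04191 — 2 statements merged into one kernel-verified Lean document; each statement's English description precedes it below -/
import Mathlib

section
/- Let M = [[A, B, 0],[C, D, 0],[E, F, L]] with A, L invertible and S := D − C·A⁻¹·B invertible, and let P := [[A, B, 0],[0, S, 0],[0, 0, L]]. Then the characteristic polynomial of M·P⁻¹ equals (X − 1)^n, where n is the total dimension |n₁| + |n₂| + |n₃|; equivalently, every (complex) eigenvalue of the right-preconditioned matrix M·P⁻¹ equals 1. -/
/-!
If `P = [[A, B], [0, T]]` then `[[A, B], [C, D]] · P⁻¹ = [[1, 0], [C A⁻¹, (D − C A⁻¹ B) T⁻¹]]`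
(block LU factorization), so the characteristic polynomial picks up `(X − 1)^|m|` from the
identity block and the rest comes from the Schur complement times `T⁻¹`. With pivot `A`, the
Schur complement of `M` is `[[S, 0], [F − E A⁻¹ B, L]]`; applying the same identity to it with
pivot `S` leaves `(L − 0) L⁻¹ = 1`.
-/

open Matrix Polynomial

namespace Matrix

variable {m n R : Type*} [Fintype m] [Fintype n] [DecidableEq m] [DecidableEq n] [CommRing R]

theorem fromBlocks_eq_mul_fromBlocks_zero₂₁ {A : Matrix m m R} {T : Matrix n n R}
    (hA : IsUnit A) (hT : IsUnit T) (B : Matrix m n R) (C : Matrix n m R) (D : Matrix n n R) :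
    fromBlocks A B C D
      = fromBlocks 1 0 (C * A⁻¹) ((D - C * A⁻¹ * B) * T⁻¹) * fromBlocks A B 0 T := by
  have hA' : A⁻¹ * A = 1 := nonsing_inv_mul A ((isUnit_iff_isUnit_det A).mp hA)
  have hT' : T⁻¹ * T = 1 := nonsing_inv_mul T ((isUnit_iff_isUnit_det T).mp hT)
  simp [fromBlocks_multiply, Matrix.mul_assoc, hA', hT']

theorem fromBlocks_mul_inv_fromBlocks_zero₂₁ {A : Matrix m m R} {T : Matrix n n R}
    (hA : IsUnit A) (hT : IsUnit T) (B : Matrix m n R) (C : Matrix n m R) (D : Matrix n n R) :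
    fromBlocks A B C D * (fromBlocks A B 0 T)⁻¹
      = fromBlocks 1 0 (C * A⁻¹) ((D - C * A⁻¹ * B) * T⁻¹) := by
  have hP : IsUnit (fromBlocks A B 0 T).det :=
    (isUnit_iff_isUnit_det _).mp (isUnit_fromBlocks_zero₂₁.mpr ⟨hA, hT⟩)
  rw [fromBlocks_eq_mul_fromBlocks_zero₂₁ hA hT B C D, mul_nonsing_inv_cancel_right _ _ hP]

theorem charpoly_fromBlocks_mul_inv_fromBlocks_zero₂₁ {A : Matrix m m R} {T : Matrix n n R}
    (hA : IsUnit A) (hT : IsUnit T) (B : Matrix m n R) (C : Matrix n m R) (D : Matrix n n R) :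
    (fromBlocks A B C D * (fromBlocks A B 0 T)⁻¹).charpoly
      = (X - 1) ^ Fintype.card m * ((D - C * A⁻¹ * B) * T⁻¹).charpoly := by
  rw [fromBlocks_mul_inv_fromBlocks_zero₂₁ hA hT, charpoly_fromBlocks_zero₁₂, charpoly_one]

end Matrix

/-- With the exact block triangular preconditioner
`P = [[A, B, 0],[0, S, 0],[0, 0, L]]` (with `S = D − C·A⁻¹·B` the Schur
complement), the characteristic polynomial of `M·P⁻¹` is `(X − 1)^n` where `n`
is the total dimension; equivalently, every complex eigenvalue of `M·P⁻¹`
equals `1`. -/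
theorem charpoly_right_preconditioned
    {n₁ n₂ n₃ : Type*} [Fintype n₁] [Fintype n₂] [Fintype n₃]
    [DecidableEq n₁] [DecidableEq n₂] [DecidableEq n₃]
    (A : Matrix n₁ n₁ ℝ) (B : Matrix n₁ n₂ ℝ) (C : Matrix n₂ n₁ ℝ)
    (D : Matrix n₂ n₂ ℝ) (E : Matrix n₃ n₁ ℝ) (F : Matrix n₃ n₂ ℝ)
    (L : Matrix n₃ n₃ ℝ)
    (hA : IsUnit A) (hL : IsUnit L) (hS : IsUnit (D - C * A⁻¹ * B))
    (M : Matrix (n₁ ⊕ n₂ ⊕ n₃) (n₁ ⊕ n₂ ⊕ n₃) ℝ)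
    (hM : M = Matrix.fromBlocks A (Matrix.fromCols B 0)
        (Matrix.fromRows C E) (Matrix.fromBlocks D 0 F L))
    (P : Matrix (n₁ ⊕ n₂ ⊕ n₃) (n₁ ⊕ n₂ ⊕ n₃) ℝ)
    (hP : P = Matrix.fromBlocks A (Matrix.fromCols B 0)
        0 (Matrix.fromBlocks (D - C * A⁻¹ * B) 0 0 L)) :
    (M * P⁻¹).charpoly
        = (X - 1) ^ (Fintype.card n₁ + Fintype.card n₂ + Fintype.card n₃) ∧
    ∀ z : ℂ, (((M * P⁻¹).map (algebraMap ℝ ℂ)).charpoly).IsRoot z → z = 1 := by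
  set S := D - C * A⁻¹ * B
  have hSchur : fromBlocks D 0 F L - fromRows C E * A⁻¹ * fromCols B 0
      = fromBlocks S 0 (F - E * A⁻¹ * B) L := by
    rw [fromRows_mul, fromRows_mul_fromCols, sub_eq_add_neg, fromBlocks_neg, fromBlocks_add]
    simp [S, sub_eq_add_neg]
  have hchar : (M * P⁻¹).charpoly
      = (X - 1) ^ (Fintype.card n₁ + Fintype.card n₂ + Fintype.card n₃) := by
    rw [hM, hP,
      charpoly_fromBlocks_mul_inv_fromBlocks_zero₂₁ hA (isUnit_fromBlocks_zero₂₁.mpr ⟨hS, hL⟩),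
      hSchur, charpoly_fromBlocks_mul_inv_fromBlocks_zero₂₁ hS hL]
    simp [mul_nonsing_inv _ ((isUnit_iff_isUnit_det L).mp hL), charpoly_one, pow_add, mul_assoc]
  refine ⟨hchar, fun z hz => ?_⟩
  rw [charpoly_map, hchar] at hz
  have hz' : (z - 1) ^ (Fintype.card n₁ + Fintype.card n₂ + Fintype.card n₃) = 0 := by
    simpa using hz
  exact sub_eq_zero.mp (eq_zero_of_pow_eq_zero hz')
end

section
/- Let M = [[A, B, 0],[C, D, 0],[E, F, L]] with A, L invertible and S := D − C·A⁻¹·B invertible, and let P := [[A, B, 0],[0, S, 0],[0, 0, L]]. Then (M·P⁻¹ − I)³ = 0; that is, M·P⁻¹ − I is nilpotent of index at most 3, so the minimal polynomial of M·P⁻¹ divides (X − 1)³ and a Krylov method such as GMRES applied to the exactly preconditioned system terminates in at most three iterations in exact arithmetic. -/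
/-!
Block LU: with `S = D − C A⁻¹ B`, the matrix `M` factors as `T P` where
`T = [[I, 0, 0], [C A⁻¹, I, 0], [E A⁻¹, (F − E A⁻¹ B) S⁻¹, I]]` is unit block lower triangular.
Hence `M P⁻¹ − I = T − I` is strictly block lower triangular with three block rows, so its cube
vanishes, and `(X − 1)³` annihilates `M P⁻¹`.
-/

open Matrix Polynomial

namespace Matrix

variable {R l m n : Type*} [Fintype l] [Fintype m] [Fintype n]
  [DecidableEq l] [DecidableEq m] [DecidableEq n]

theorem fromBlocks_zero_zero_pow_succ [Semiring R] (C : Matrix n m R) (N : Matrix n n R)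
    (k : ℕ) :
    fromBlocks (0 : Matrix m m R) 0 C N ^ (k + 1) = fromBlocks 0 0 (N ^ k * C) (N ^ (k + 1)) := by
  induction k with
  | zero => simp
  | succ k ih =>
    rw [pow_succ', ih, fromBlocks_multiply]
    simp [pow_succ' N, Matrix.mul_assoc]

theorem fromBlocks_zero_zero_pow_succ_eq_zero [Semiring R] (C : Matrix n m R)
    {N : Matrix n n R} {k : ℕ} (hN : N ^ k = 0) :
    fromBlocks (0 : Matrix m m R) 0 C N ^ (k + 1) = 0 := by
  rw [fromBlocks_zero_zero_pow_succ, hN, pow_succ, hN]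
  simp

theorem fromBlocks_fromRows_fromBlocks_pow_three [Semiring R] (X : Matrix m l R)
    (Y : Matrix n l R) (Z : Matrix n m R) :
    fromBlocks (0 : Matrix l l R) 0 (fromRows X Y) (fromBlocks 0 0 Z (0 : Matrix n n R)) ^ 3 = 0 :=
  fromBlocks_zero_zero_pow_succ_eq_zero _ <|
    fromBlocks_zero_zero_pow_succ_eq_zero _ (pow_one (0 : Matrix n n R))

theorem fromBlocks_eq_one_add_mul [CommRing R] {A : Matrix l l R} (B : Matrix l m R)
    (C : Matrix m l R) {D : Matrix m m R} (E : Matrix n l R) (F : Matrix n m R)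
    (L : Matrix n n R) (hA : IsUnit A) (hS : IsUnit (D - C * A⁻¹ * B)) :
    fromBlocks A (fromCols B 0) (fromRows C E) (fromBlocks D 0 F L) =
      (1 + fromBlocks 0 0 (fromRows (C * A⁻¹) (E * A⁻¹))
          (fromBlocks 0 0 ((F - E * A⁻¹ * B) * (D - C * A⁻¹ * B)⁻¹) 0)) *
        fromBlocks A (fromCols B 0) 0 (fromBlocks (D - C * A⁻¹ * B) 0 0 L) := by
  obtain ⟨S, rfl⟩ : ∃ S, D = S + C * A⁻¹ * B := ⟨_, (sub_add_cancel D _).symm⟩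
  rw [add_sub_cancel_right] at hS ⊢
  rw [add_mul, one_mul, fromBlocks_multiply, fromRows_mul_fromCols]
  simp [fromBlocks_multiply, fromBlocks_add, Matrix.mul_assoc, add_comm,
    nonsing_inv_mul _ ((isUnit_iff_isUnit_det _).mp hA),
    nonsing_inv_mul _ ((isUnit_iff_isUnit_det _).mp hS)]

end Matrix

/-- With the exact block triangular preconditioner, `M·P⁻¹ − I` is nilpotent of
index at most `3`: `(M·P⁻¹ − I)³ = 0`, and hence the minimal polynomial of
`M·P⁻¹` divides `(X − 1)³`. -/
theorem right_preconditioned_nilpotent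
    {n₁ n₂ n₃ : Type*} [Fintype n₁] [Fintype n₂] [Fintype n₃]
    [DecidableEq n₁] [DecidableEq n₂] [DecidableEq n₃]
    (A : Matrix n₁ n₁ ℝ) (B : Matrix n₁ n₂ ℝ) (C : Matrix n₂ n₁ ℝ)
    (D : Matrix n₂ n₂ ℝ) (E : Matrix n₃ n₁ ℝ) (F : Matrix n₃ n₂ ℝ)
    (L : Matrix n₃ n₃ ℝ)
    (hA : IsUnit A) (hL : IsUnit L) (hS : IsUnit (D - C * A⁻¹ * B))
    (M : Matrix (n₁ ⊕ n₂ ⊕ n₃) (n₁ ⊕ n₂ ⊕ n₃) ℝ)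
    (hM : M = Matrix.fromBlocks A (Matrix.fromCols B 0)
        (Matrix.fromRows C E) (Matrix.fromBlocks D 0 F L))
    (P : Matrix (n₁ ⊕ n₂ ⊕ n₃) (n₁ ⊕ n₂ ⊕ n₃) ℝ)
    (hP : P = Matrix.fromBlocks A (Matrix.fromCols B 0)
        0 (Matrix.fromBlocks (D - C * A⁻¹ * B) 0 0 L)) :
    (M * P⁻¹ - 1) ^ 3 = 0 ∧
    minpoly ℝ (M * P⁻¹) ∣ (X - 1 : Polynomial ℝ) ^ 3 := by
  have hP_unit : IsUnit P.det := by
    rw [← isUnit_iff_isUnit_det, hP]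
    simp [hA, hS, hL]
  have h_error : M * P⁻¹ - 1 = fromBlocks 0 0 (fromRows (C * A⁻¹) (E * A⁻¹))
      (fromBlocks 0 0 ((F - E * A⁻¹ * B) * (D - C * A⁻¹ * B)⁻¹) 0) := by
    rw [hM, fromBlocks_eq_one_add_mul B C E F L hA hS, ← hP,
      mul_nonsing_inv_cancel_right _ _ hP_unit, add_sub_cancel_left]
  have h_cube : (M * P⁻¹ - 1) ^ 3 = 0 := by
    rw [h_error]
    exact fromBlocks_fromRows_fromBlocks_pow_three _ _ _
  refine ⟨h_cube, minpoly.dvd ℝ _ ?_⟩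
  simpa using h_cube
end
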